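/- arXiv:2012.15193 — 2 statements merged into one kernel-verified Lean document; each statement's English description precedes it below -/
import Mathlib

section
/- For any graph G and any n ≥ 1, the domination polynomial satisfies D(G[K_n], x) = D(G, (1+x)^n - 1), where G[K_n] is the lexicographic substitution of the complete graph K_n into each vertex of G. -/
/-!
Write `y = (1 + x) ^ n - 1 = ∑_{∅ ≠ A ⊆ Fin n} x ^ |A|`. A set `S ⊆ V × Fin n` dominates `G[K_n]`
exactly when its shadow `T = π₁(S)` dominates `G`: a vertex of a chosen clique dominates the whole
clique. Grouping the dominating sets of `G[K_n]` by their shadow, those with shadow `T` are the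
choices of a nonempty subset of `Fin n` over each vertex of `T`, so they contribute
`∏_{v ∈ T} ∑_{∅ ≠ A} x ^ |A| = y ^ |T|`.
-/

open Finset

open scoped Classical in
noncomputable def domPoly {V : Type*} [Fintype V] (G : SimpleGraph V) (x : ℝ) : ℝ :=
  ∑ S ∈ Finset.univ.powerset.filter
      (fun S : Finset V => ∀ v : V, v ∈ S ∨ ∃ u ∈ S, G.Adj u v), x ^ S.card

/-- The substitution `G[K n]`: replace each vertex of `G` by a clique of size `n`. -/
def compSub {V : Type*} (G : SimpleGraph V) (n : ℕ) : SimpleGraph (V × Fin n) where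
  Adj p q := G.Adj p.1 q.1 ∨ (p.1 = q.1 ∧ p.2 ≠ q.2)
  symm := by
    constructor
    rintro p q (h | ⟨h1, h2⟩)
    · exact Or.inl h.symm
    · exact Or.inr ⟨h1.symm, h2.symm⟩
  loopless := by
    constructor
    rintro p (h | ⟨_, h2⟩)
    · exact G.irrefl h
    · exact h2 rfl

namespace Fintype

variable {α β R : Type*} [Fintype α] [Fintype β]

theorem sum_pow_card_nonempty [CommRing R] (x : R) :
    ∑ A : Finset α with A.Nonempty, x ^ #A = (1 + x) ^ card α - 1 := by
  classical
  have h_all : ∑ A : Finset α, x ^ #A = (1 + x) ^ card α := by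
    simpa [add_comm x] using Fintype.sum_pow_mul_eq_add_pow α x 1
  have h_empty : ({A : Finset α | ¬A.Nonempty} : Finset (Finset α)) = {∅} := by
    ext A; simp [not_nonempty_iff_eq_empty]
  rw [← h_all, ← sum_filter_add_sum_filter_not univ Finset.Nonempty, h_empty]
  simp

variable [DecidableEq α] [DecidableEq β]

@[simps]
def finsetProdEquivFun : Finset (α × β) ≃ (α → Finset β) where
  toFun S a := {b | (a, b) ∈ S}
  invFun f := {p | p.2 ∈ f p.1}
  left_inv S := by ext; simp
  right_inv f := by ext; simp

theorem finsetProdEquivFun_nonempty_iff (S : Finset (α × β)) (a : α) :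
    (finsetProdEquivFun S a).Nonempty ↔ a ∈ S.image Prod.fst := by
  simp [finsetProdEquivFun, Finset.Nonempty]

theorem card_eq_sum_card_finsetProdEquivFun (S : Finset (α × β)) :
    #S = ∑ a, #(finsetProdEquivFun S a) := by
  simp only [finsetProdEquivFun_apply, card_filter]
  rw [← Fintype.sum_prod_type' (fun a b => if (a, b) ∈ S then 1 else 0), ← card_filter]
  simp

theorem sum_pow_card_of_image_fst_eq [CommRing R] (T : Finset α) (x : R) :
    ∑ S : Finset (α × β) with S.image Prod.fst = T, x ^ #S = ((1 + x) ^ card β - 1) ^ #T := by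
  let fibres (a : α) : Finset (Finset β) := if a ∈ T then univ.filter Finset.Nonempty else {∅}
  calc ∑ S : Finset (α × β) with S.image Prod.fst = T, x ^ #S
      = ∑ f ∈ piFinset fibres, ∏ a, x ^ #(f a) := by
        refine Finset.sum_equiv finsetProdEquivFun (fun S => ?_) (fun S _ => ?_)
        · simp only [mem_filter_univ, mem_piFinset, fibres, Finset.ext_iff]
          refine forall_congr' fun a => ?_
          rw [← finsetProdEquivFun_nonempty_iff]
          split_ifs with ha <;> simp [ha, nonempty_iff_ne_empty]
        · rw [card_eq_sum_card_finsetProdEquivFun, prod_pow_eq_pow_sum]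
    _ = ∏ a, ∑ A ∈ fibres a, x ^ #A := (prod_univ_sum fibres fun _ A => x ^ #A).symm
    _ = ∏ a, if a ∈ T then (1 + x) ^ card β - 1 else 1 := by
        refine Finset.prod_congr rfl fun a _ => ?_
        split_ifs <;> simp [fibres, *, sum_pow_card_nonempty]
    _ = ((1 + x) ^ card β - 1) ^ #T := by rw [Fintype.prod_ite_mem, prod_const]

end Fintype

namespace SimpleGraph

variable {V : Type*} (G : SimpleGraph V)

def IsDominatingSet (S : Finset V) : Prop :=
  ∀ v, v ∈ S ∨ ∃ u ∈ S, G.Adj u v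

open scoped Classical in
theorem domPoly_eq_sum [Fintype V] (x : ℝ) :
    domPoly G x = ∑ S : Finset V with G.IsDominatingSet S, x ^ #S := by
  rw [domPoly, powerset_univ]
  congr

theorem isDominatingSet_compSub_iff [DecidableEq V] {n : ℕ} (hn : 0 < n)
    {S : Finset (V × Fin n)} :
    (compSub G n).IsDominatingSet S ↔ G.IsDominatingSet (S.image Prod.fst) := by
  simp only [IsDominatingSet, mem_image]
  constructor
  · intro h v
    rcases h (v, ⟨0, hn⟩) with hv | ⟨q, hq, hq_adj | ⟨hq_eq, -⟩⟩
    · exact Or.inl ⟨_, hv, rfl⟩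
    · exact Or.inr ⟨q.1, ⟨q, hq, rfl⟩, hq_adj⟩
    · exact Or.inl ⟨q, hq, hq_eq⟩
  · rintro h ⟨v, i⟩
    rcases h v with ⟨q, hq, rfl⟩ | ⟨u, ⟨q, hq, rfl⟩, hadj⟩
    · by_cases hi : q.2 = i
      · exact Or.inl (by rwa [← hi])
      · exact Or.inr ⟨q, hq, Or.inr ⟨rfl, hi⟩⟩
    · exact Or.inr ⟨q, hq, Or.inl hadj⟩

end SimpleGraph

open SimpleGraph in
theorem domPoly_compSub {V : Type*} [Fintype V] (G : SimpleGraph V) (n : ℕ) (hn : 1 ≤ n)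
    (x : ℝ) : domPoly (compSub G n) x = domPoly G ((1 + x) ^ n - 1) := by
  classical
  rw [domPoly_eq_sum, domPoly_eq_sum,
    ← sum_fiberwise_of_maps_to (g := fun S => S.image Prod.fst)
      (t := {T : Finset V | G.IsDominatingSet T}) fun S hS =>
      (mem_filter_univ _).2 ((isDominatingSet_compSub_iff G hn).1 ((mem_filter_univ _).1 hS))]
  refine sum_congr rfl fun T hT => ?_
  have h_fibre := Fintype.sum_pow_card_of_image_fst_eq (β := Fin n) T x
  rw [Fintype.card_fin] at h_fibre
  rw [← h_fibre, filter_filter]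
  refine sum_congr (filter_congr fun S _ => ?_) fun _ _ => rfl
  rw [isDominatingSet_compSub_iff G hn, and_iff_right_iff_imp]
  rintro rfl
  exact (mem_filter_univ _).1 hT
end

section
/- The domination polynomial of K_{k,k} is D(K_{k,k}, x) = (1+x)^{2k} - 2(1+x)^k + 2x^k + 1, and for odd k, D(K_{k,k}, -1) = -1. -/
/-!
A set `A ⊔ B` of vertices of `K_{m,n}` (`m, n ≥ 1`) is dominating iff both `A` and `B` are
nonempty, or it is one whole side. Summing `x ^ (#A + #B)` over these sets gives
`((1 + x) ^ m - 1) * ((1 + x) ^ n - 1) + x ^ m + x ^ n`, which for `m = n = k` is the stated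
polynomial; at `x = -1` with `k` odd it equals `1 - 2 = -1`.
-/

open Finset

def SimpleGraph.IsDominating {V : Type*} (G : SimpleGraph V) (S : Finset V) : Prop :=
  ∀ v, v ∈ S ∨ ∃ u ∈ S, G.Adj u v

section PowCard

variable {R : Type*} [CommRing R] (α : Type*) [Fintype α] (x : R)

theorem Fintype.sum_pow_card_finset : ∑ s : Finset α, x ^ #s = (1 + x) ^ Fintype.card α := by
  simpa [add_comm] using Fintype.sum_pow_mul_eq_add_pow α x 1

theorem Fintype.sum_pow_card_erase_empty [DecidableEq α] :
    ∑ s ∈ univ.erase (∅ : Finset α), x ^ #s = (1 + x) ^ Fintype.card α - 1 := by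
  rw [sum_erase_eq_sub (mem_univ _), Fintype.sum_pow_card_finset, Finset.card_empty, pow_zero]

end PowCard

section CompleteBipartite

variable {α β : Type*} [Fintype α] [Fintype β]

theorem completeBipartiteGraph_isDominating_iff (S : Finset (α ⊕ β)) :
    (completeBipartiteGraph α β).IsDominating S ↔
      (S.toLeft = univ ∨ S.toRight.Nonempty) ∧ (S.toRight = univ ∨ S.toLeft.Nonempty) := by
  simp [SimpleGraph.IsDominating, eq_univ_iff_forall, Finset.Nonempty, forall_or_right]

variable [DecidableEq α] [DecidableEq β]

variable (α β) in
def completeBipartiteDominatingPairs : Finset (Finset α × Finset β) :=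
  (univ.erase ∅ ×ˢ univ.erase ∅) ∪ {(univ, ∅), (∅, univ)}

variable [Nonempty α]

theorem sum_completeBipartiteDominatingPairs (x : ℝ) :
    ∑ p ∈ completeBipartiteDominatingPairs α β, x ^ #p.1 * x ^ #p.2 =
      ((1 + x) ^ Fintype.card α - 1) * ((1 + x) ^ Fintype.card β - 1)
        + x ^ Fintype.card α + x ^ Fintype.card β := by
  have hdisj : Disjoint (univ.erase (∅ : Finset α) ×ˢ univ.erase (∅ : Finset β))
      {(univ, ∅), (∅, univ)} := by
    simp +contextual [disjoint_left]
  have hne : ((univ : Finset α), (∅ : Finset β)) ≠ (∅, univ) := by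
    simp [univ_nonempty.ne_empty]
  rw [completeBipartiteDominatingPairs, sum_union hdisj, sum_pair hne, sum_product]
  simp only [← sum_mul_sum, Fintype.sum_pow_card_erase_empty]
  simp [add_assoc]

variable [Nonempty β]

theorem mem_completeBipartiteDominatingPairs (A : Finset α) (B : Finset β) :
    (A, B) ∈ completeBipartiteDominatingPairs α β ↔
      (A = univ ∨ B.Nonempty) ∧ (B = univ ∨ A.Nonempty) := by
  have hα : (∅ : Finset α) ≠ univ := univ_nonempty.ne_empty.symm
  have hβ : (∅ : Finset β) ≠ univ := univ_nonempty.ne_empty.symm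
  simp only [completeBipartiteDominatingPairs, mem_union, mem_product, mem_erase, mem_univ,
    and_true, mem_insert, mem_singleton, Prod.mk.injEq, nonempty_iff_ne_empty]
  rcases eq_or_ne A ∅ with rfl | hA <;> rcases eq_or_ne B ∅ with rfl | hB <;> simp [*]

theorem completeBipartiteGraph_isDominating_iff_mem (S : Finset (α ⊕ β)) :
    (completeBipartiteGraph α β).IsDominating S ↔
      (S.toLeft, S.toRight) ∈ completeBipartiteDominatingPairs α β := by
  rw [completeBipartiteGraph_isDominating_iff, mem_completeBipartiteDominatingPairs]

theorem domPoly_completeBipartiteGraph_eq_sum (x : ℝ) :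
    domPoly (completeBipartiteGraph α β) x =
      ∑ p ∈ completeBipartiteDominatingPairs α β, x ^ #p.1 * x ^ #p.2 := by
  rw [domPoly, powerset_univ]
  refine sum_equiv Finset.sumEquiv.toEquiv (fun S => ?_) (fun S _ => ?_)
  · simp only [mem_filter, mem_univ, true_and]
    exact completeBipartiteGraph_isDominating_iff_mem S
  · simp [← pow_add, card_toLeft_add_card_toRight]

theorem domPoly_completeBipartiteGraph (x : ℝ) :
    domPoly (completeBipartiteGraph α β) x =
      ((1 + x) ^ Fintype.card α - 1) * ((1 + x) ^ Fintype.card β - 1)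
        + x ^ Fintype.card α + x ^ Fintype.card β := by
  rw [domPoly_completeBipartiteGraph_eq_sum, sum_completeBipartiteDominatingPairs]

end CompleteBipartite

theorem domPoly_Kkk (k : ℕ) (hk : 1 ≤ k) :
    (∀ x : ℝ, domPoly (completeBipartiteGraph (Fin k) (Fin k)) x =
      (1 + x) ^ (2 * k) - 2 * (1 + x) ^ k + 2 * x ^ k + 1) ∧
    (Odd k → domPoly (completeBipartiteGraph (Fin k) (Fin k)) (-1) = -1) := by
  have : Nonempty (Fin k) := ⟨⟨0, hk⟩⟩
  have hD (x : ℝ) : domPoly (completeBipartiteGraph (Fin k) (Fin k)) x =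
      (1 + x) ^ (2 * k) - 2 * (1 + x) ^ k + 2 * x ^ k + 1 := by
    rw [domPoly_completeBipartiteGraph, Fintype.card_fin]
    ring
  refine ⟨hD, fun hodd => ?_⟩
  rw [hD, add_neg_cancel, zero_pow (by omega), zero_pow (by omega), hodd.neg_one_pow]
  norm_num
end
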